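/- Let a > 0. Define, for t > 0 and z, w ∈ ℂ, the kernel J_a(z,w,t) = e^{-at/2} · (cosh(at))^{-1/2} · exp( (a/4)·(conj(w)² − z²)·tanh(at) + a·z·conj(w) / (2·cosh(at)) ). Then for every fixed w ∈ ℂ, the function (t,z) ↦ J_a(z,w,t) satisfies the heat equation for the complex harmonic oscillator: ∂J/∂t (z,w,t) = ∂²J/∂z² (z,w,t) − (a²z²/4)·J(z,w,t) − (a/2)·J(z,w,t) for all t > 0 and z ∈ ℂ. -/

import Mathlib

/-
Writing the kernel as `exp (P(t) z² + Q(t) z + R(t))` with `P = -(a/4) tanh(at)`,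
`Q = a w̄ / (2 cosh(at))` and `R = -at/2 - ½ log cosh(at) + (a/4) w̄² tanh(at)`, both sides of the
heat equation become the kernel times a quadratic polynomial in `z`. Comparing coefficients, the
equation holds exactly when `P' = 4P² - a²/4`, `Q' = 4PQ` and `R' = Q² + 2P - a/2`, and these three
ordinary differential equations follow from `tanh' = 1 - tanh²` and `cosh' = sinh`.
-/

open Complex Real

/-- The heat kernel of the complex harmonic oscillator. -/
noncomputable def complexOscKernel (a : ℝ) (z w : ℂ) (t : ℝ) : ℂ :=
  (Real.exp (-(a * t) / 2) : ℂ) * ((Real.sqrt (Real.cosh (a * t)) : ℂ))⁻¹ *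
    Complex.exp ((a / 4) * ((starRingEnd ℂ) w ^ 2 - z ^ 2) * (Real.tanh (a * t) : ℂ)
      + a * z * (starRingEnd ℂ) w / (2 * (Real.cosh (a * t) : ℂ)))

section QuadraticExponential

lemma hasDerivAt_cexp_quadratic (p q r z : ℂ) :
    HasDerivAt (fun z => cexp (p * z ^ 2 + q * z + r))
      (cexp (p * z ^ 2 + q * z + r) * (2 * p * z + q)) z := by
  have hquad : HasDerivAt (fun z => p * z ^ 2 + q * z + r) (2 * p * z + q) z := by
    refine ((((hasDerivAt_pow 2 z).const_mul p).add
      ((hasDerivAt_id z).const_mul q)).add_const r).congr_deriv ?_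
    norm_num
    ring
  exact hquad.cexp

lemma iteratedDeriv_two_cexp_quadratic (p q r z : ℂ) :
    iteratedDeriv 2 (fun z => cexp (p * z ^ 2 + q * z + r)) z =
      ((2 * p * z + q) ^ 2 + 2 * p) * cexp (p * z ^ 2 + q * z + r) := by
  have hfirst : deriv (fun z => cexp (p * z ^ 2 + q * z + r)) =
      fun z => cexp (p * z ^ 2 + q * z + r) * (2 * p * z + q) :=
    funext fun z => (hasDerivAt_cexp_quadratic p q r z).deriv
  have hlin : HasDerivAt (fun z => 2 * p * z + q) (2 * p) z := by
    simpa using ((hasDerivAt_id z).const_mul (2 * p)).add_const q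
  rw [iteratedDeriv_succ, iteratedDeriv_one, hfirst]
  exact ((hasDerivAt_cexp_quadratic p q r z).mul hlin).deriv.trans (by ring)

variable {P Q R : ℝ → ℂ} {t : ℝ}

lemma hasDerivAt_cexp_quadratic_of_coeffs {P' Q' R' : ℂ} (hP : HasDerivAt P P' t)
    (hQ : HasDerivAt Q Q' t) (hR : HasDerivAt R R' t) (z : ℂ) :
    HasDerivAt (fun s => cexp (P s * z ^ 2 + Q s * z + R s))
      (cexp (P t * z ^ 2 + Q t * z + R t) * (P' * z ^ 2 + Q' * z + R')) t :=
  (((hP.mul_const (z ^ 2)).add (hQ.mul_const z)).add hR).cexp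

theorem deriv_cexp_quadratic_eq_heat (c d : ℂ) (hP : HasDerivAt P (4 * P t ^ 2 - c) t)
    (hQ : HasDerivAt Q (4 * P t * Q t) t) (hR : HasDerivAt R (Q t ^ 2 + 2 * P t - d) t)
    (z : ℂ) :
    deriv (fun s => cexp (P s * z ^ 2 + Q s * z + R s)) t =
      iteratedDeriv 2 (fun z => cexp (P t * z ^ 2 + Q t * z + R t)) z
        - c * z ^ 2 * cexp (P t * z ^ 2 + Q t * z + R t)
        - d * cexp (P t * z ^ 2 + Q t * z + R t) := by
  rw [(hasDerivAt_cexp_quadratic_of_coeffs hP hQ hR z).deriv, iteratedDeriv_two_cexp_quadratic]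
  ring

end QuadraticExponential

namespace Real

lemma tanh_sq (x : ℝ) : tanh x ^ 2 = 1 - 1 / cosh x ^ 2 := by
  have hcosh : cosh x ≠ 0 := (cosh_pos x).ne'
  rw [tanh_eq_sinh_div_cosh]
  field_simp
  linarith [cosh_sq_sub_sinh_sq x]

lemma hasDerivAt_tanh (x : ℝ) : HasDerivAt tanh (1 / cosh x ^ 2) x := by
  have hcosh : cosh x ≠ 0 := (cosh_pos x).ne'
  rw [show tanh = fun x => sinh x / cosh x from funext tanh_eq_sinh_div_cosh]
  refine ((hasDerivAt_sinh x).div (hasDerivAt_cosh x) hcosh).congr_deriv ?_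
  rw [← cosh_sq_sub_sinh_sq x]
  ring

lemma hasDerivAt_inv_cosh (x : ℝ) : HasDerivAt (fun x => (cosh x)⁻¹) (-(tanh x / cosh x)) x := by
  refine ((hasDerivAt_cosh x).inv (cosh_pos x).ne').congr_deriv ?_
  rw [tanh_eq_sinh_div_cosh]
  ring

lemma hasDerivAt_log_cosh (x : ℝ) : HasDerivAt (fun x => log (cosh x)) (tanh x) x := by
  refine ((hasDerivAt_cosh x).log (cosh_pos x).ne').congr_deriv ?_
  rw [tanh_eq_sinh_div_cosh]

lemma sqrt_eq_exp_log_div_two {x : ℝ} (hx : 0 < x) : √x = exp (log x / 2) := by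
  rw [sqrt_eq_rpow, rpow_def_of_pos hx]
  ring_nf

end Real

noncomputable def oscP (a t : ℝ) : ℂ := -(a / 4) * Real.tanh (a * t)

noncomputable def oscQ (a : ℝ) (w : ℂ) (t : ℝ) : ℂ :=
  a / 2 * (Real.cosh (a * t))⁻¹ * starRingEnd ℂ w

noncomputable def oscR (a : ℝ) (w : ℂ) (t : ℝ) : ℂ :=
  (-(a * t) / 2 - Real.log (Real.cosh (a * t)) / 2 : ℝ)
    + a / 4 * Real.tanh (a * t) * starRingEnd ℂ w ^ 2

lemma complexOscKernel_eq_cexp (a : ℝ) (z w : ℂ) (t : ℝ) :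
    complexOscKernel a z w t = cexp (oscP a t * z ^ 2 + oscQ a w t * z + oscR a w t) := by
  rw [complexOscKernel, Real.sqrt_eq_exp_log_div_two (Real.cosh_pos _), ofReal_exp, ofReal_exp,
    ← Complex.exp_neg, ← Complex.exp_add, ← Complex.exp_add]
  congr 1
  simp only [oscP, oscQ, oscR, ofReal_sub, ofReal_div, ofReal_neg, ofReal_mul, ofReal_ofNat,
    ofReal_inv]
  ring

lemma hasDerivAt_oscP (a t : ℝ) : HasDerivAt (oscP a) (4 * oscP a t ^ 2 - a ^ 2 / 4) t := by
  refine ((((Real.hasDerivAt_tanh (a * t)).comp t (hasDerivAt_const_mul a)).ofReal_comp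
    ).const_mul (-(a / 4 : ℂ))).congr_deriv ?_
  have htanh : (Real.tanh (a * t) : ℂ) ^ 2 = 1 - 1 / (Real.cosh (a * t) : ℂ) ^ 2 := by
    exact_mod_cast congrArg ofReal (Real.tanh_sq (a * t))
  simp only [oscP, ofReal_mul, ofReal_div, ofReal_one, ofReal_pow]
  linear_combination (-(a : ℂ) ^ 2 / 4) * htanh

lemma hasDerivAt_oscQ (a : ℝ) (w : ℂ) (t : ℝ) :
    HasDerivAt (oscQ a w) (4 * oscP a t * oscQ a w t) t := by
  refine (((((Real.hasDerivAt_inv_cosh (a * t)).comp t (hasDerivAt_const_mul a)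
    ).ofReal_comp).const_mul (a / 2 : ℂ)).mul_const (starRingEnd ℂ w)).congr_deriv ?_
  simp only [oscP, oscQ, ofReal_mul, ofReal_div, ofReal_neg, ofReal_inv]
  ring

lemma hasDerivAt_oscR (a : ℝ) (w : ℂ) (t : ℝ) :
    HasDerivAt (oscR a w) (oscQ a w t ^ 2 + 2 * oscP a t - a / 2) t := by
  have hlin : HasDerivAt (fun s => a * s) a t := hasDerivAt_const_mul a
  have hreal := (hlin.neg.div_const 2).sub
    (((Real.hasDerivAt_log_cosh (a * t)).comp t hlin).div_const 2)
  have htanh := ((((Real.hasDerivAt_tanh (a * t)).comp t hlin).ofReal_comp).const_mul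
    (a / 4 : ℂ)).mul_const (starRingEnd ℂ w ^ 2)
  refine (hreal.ofReal_comp.add htanh).congr_deriv ?_
  simp only [oscP, oscQ, ofReal_mul, ofReal_div, ofReal_neg, ofReal_sub, ofReal_one, ofReal_pow,
    ofReal_ofNat, ofReal_inv]
  ring

theorem complexOscKernel_heat_general (a : ℝ) (w : ℂ) :
    ∀ (t : ℝ), 0 < t → ∀ (z : ℂ),
      deriv (fun t' : ℝ => complexOscKernel a z w t') t =
        iteratedDeriv 2 (fun z' : ℂ => complexOscKernel a z' w t) z
          - ((a : ℂ) ^ 2 * z ^ 2 / 4) * complexOscKernel a z w t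
          - ((a : ℂ) / 2) * complexOscKernel a z w t := by
  intro t _ z
  simp only [complexOscKernel_eq_cexp]
  rw [deriv_cexp_quadratic_eq_heat ((a : ℂ) ^ 2 / 4) (a / 2) (hasDerivAt_oscP a t)
    (hasDerivAt_oscQ a w t) (hasDerivAt_oscR a w t) z]
  ring

/-- For each fixed `w`, the kernel `J_a(z,w,t)` satisfies the heat equation for the
complex harmonic oscillator `∂J/∂t = ∂²J/∂z² − (a²z²/4)J − (a/2)J` for `t > 0`. -/
theorem complexOscKernel_heat (a : ℝ) (ha : 0 < a) (w : ℂ) :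
    ∀ (t : ℝ), 0 < t → ∀ (z : ℂ),
      deriv (fun t' : ℝ => complexOscKernel a z w t') t =
        iteratedDeriv 2 (fun z' : ℂ => complexOscKernel a z' w t) z
          - ((a : ℂ) ^ 2 * z ^ 2 / 4) * complexOscKernel a z w t
          - ((a : ℂ) / 2) * complexOscKernel a z w t :=
  complexOscKernel_heat_general a w
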